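/- Let Λ be the Lobachevsky function, and for n ≥ 5 set θ_n = π/2 − arccos(1/(2·cos(π/n))) and vol(L(n)) = (n/2)·(2Λ(θ_n) + Λ(θ_n + π/n) + Λ(θ_n − π/n) − Λ(2θ_n − π/2)). Then vol(L(n))/(4n) converges to (5/8)·Λ(π/6) as n → ∞; that is, the normalized volume ω(L(n)) = vol(L(n))/ver(L(n)) of the right-angled hyperbolic Löbell polyhedron L(n), which has 4n vertices, tends to 5v_tet/16. -/

import Mathlib

/-!
The Lobachevsky function is continuous, since `log |2 sin t|` has only logarithmic singularities
and is therefore locally integrable, and it is odd, since the integrand is even. As `n → ∞`,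
`θ_n → π/2 - arccos (1/2) = π/6` and `π/n → 0`, so
`vol(L(n))/(4n) = (2Λ(θ_n) + Λ(θ_n + π/n) + Λ(θ_n - π/n) - Λ(2θ_n - π/2))/8`
tends to `(4Λ(π/6) - Λ(-π/6))/8 = (5/8)Λ(π/6)`.
-/

open Real Filter

/-- The Lobachevsky function `Λ(θ) = −∫₀^θ log|2 sin t| dt`. -/
noncomputable def lobachevsky (θ : ℝ) : ℝ :=
  -∫ t in (0:ℝ)..θ, Real.log |2 * Real.sin t|

/-- The angle parameter `θ_n = π/2 − arccos(1/(2cos(π/n)))` of the Löbell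
polyhedron `L(n)`. -/
noncomputable def lobellAngle (n : ℕ) : ℝ :=
  π / 2 - Real.arccos (1 / (2 * Real.cos (π / (n : ℝ))))

/-- The volume of the right-angled hyperbolic Löbell polyhedron `L(n)`,
formula (5) of the paper. -/
noncomputable def lobellVolume (n : ℕ) : ℝ :=
  ((n : ℝ) / 2) * (2 * lobachevsky (lobellAngle n)
    + lobachevsky (lobellAngle n + π / (n : ℝ))
    + lobachevsky (lobellAngle n - π / (n : ℝ))
    - lobachevsky (2 * lobellAngle n - π / 2))

open MeasureTheory Topology

theorem intervalIntegrable_log_abs_two_mul_sin (a b : ℝ) :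
    IntervalIntegrable (fun t => log |2 * sin t|) volume a b :=
  (analyticOnNhd_const.mul analyticOnNhd_sin).meromorphicOn.intervalIntegrable_log_norm

@[fun_prop]
theorem continuous_lobachevsky : Continuous lobachevsky :=
  (intervalIntegral.continuous_primitive intervalIntegrable_log_abs_two_mul_sin 0).neg

theorem lobachevsky_neg (θ : ℝ) : lobachevsky (-θ) = -lobachevsky θ := by
  simp only [lobachevsky, neg_inj]
  rw [← neg_zero, ← intervalIntegral.integral_comp_neg]
  simp [sin_neg, intervalIntegral.integral_symm 0 θ]

theorem tendsto_lobellAngle : Tendsto lobellAngle atTop (𝓝 (π / 6)) := by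
  have hcos : Tendsto (fun n : ℕ => 2 * cos (π / n)) atTop (𝓝 2) := by
    simpa using
      ((continuous_cos.tendsto 0).comp (tendsto_const_div_atTop_nhds_zero_nat π)).const_mul 2
  have harccos : arccos (1 / 2) = π / 3 := by
    rw [← cos_pi_div_three, arccos_cos (by positivity) (by linarith [pi_pos])]
  have harccos_lim := (continuous_arccos.tendsto (1 / 2)).comp
    (tendsto_const_nhds.div hcos two_ne_zero)
  rw [harccos] at harccos_lim
  rw [show π / 6 = π / 2 - π / 3 by ring]
  exact harccos_lim.const_sub (π / 2)

theorem lobellVolume_div_four_mul (n : ℕ) (hn : n ≠ 0) :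
    lobellVolume n / (4 * n) = (2 * lobachevsky (lobellAngle n)
      + lobachevsky (lobellAngle n + π / n) + lobachevsky (lobellAngle n - π / n)
      - lobachevsky (2 * lobellAngle n - π / 2)) / 8 := by
  have : (n : ℝ) ≠ 0 := Nat.cast_ne_zero.mpr hn
  rw [lobellVolume]
  field_simp
  ring

/-- The normalized volume `ω(L(n)) = vol(L(n))/(4n)` of the Löbell polyhedron
tends to `5v_tet/16 = (5/8)Λ(π/6)` as `n → ∞`. -/
theorem lobell_normalized_volume_tendsto :
    Tendsto (fun n : ℕ => lobellVolume n / (4 * (n : ℝ)))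
      atTop (nhds ((5 / 8) * lobachevsky (π / 6))) := by
  set F : ℝ × ℝ → ℝ := fun p => (2 * lobachevsky p.1 + lobachevsky (p.1 + p.2)
    + lobachevsky (p.1 - p.2) - lobachevsky (2 * p.1 - π / 2)) / 8
  have hF : Continuous F := by fun_prop
  have hF0 : F (π / 6, 0) = 5 / 8 * lobachevsky (π / 6) := by
    simp only [F, add_zero, sub_zero, show 2 * (π / 6) - π / 2 = -(π / 6) by ring, lobachevsky_neg]
    ring
  rw [← hF0]
  refine ((hF.tendsto _).comp (tendsto_lobellAngle.prodMk_nhds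
    (tendsto_const_div_atTop_nhds_zero_nat π))).congr' ?_
  filter_upwards [eventually_ne_atTop 0] with n hn
  exact (lobellVolume_div_four_mul n hn).symm
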